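/- Let K be a field of characteristic 3, K(s) the rational function field, and f(t) = t^3 - s. In the splitting algebra K(s)_f with universal roots τ_1, τ_2, τ_3, one has (τ_i - τ_j)^2 = 0 for all i, j; the ideal I generated by the differences τ_i - τ_j is the unique maximal ideal of K(s)_f; I is stable under the S_3-action; and S_3 acts trivially on the residue field K(s)_f/I, even though this residue field is the (purely inseparable, degree 3) splitting field of t^3 - s over K(s) and the inclusion K(s) → K(s)_f/I is not surjective. -/

import Mathlib

open MvPolynomial Polynomial

/-- The ideal `(s₁ - f₁, ..., sₙ - fₙ)` defining the splitting algebra, where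
`fᵢ = (-1)^i · coeff f (n - i)` are the signed coefficients of `f`. -/
noncomputable def splittingIdeal (A : Type*) [CommRing A] (f : Polynomial A) (n : ℕ) :
    Ideal (MvPolynomial (Fin n) A) :=
  Ideal.span (Set.range fun i : Fin n =>
    esymm (Fin n) A ((i : ℕ) + 1) -
      MvPolynomial.C ((-1 : A) ^ ((i : ℕ) + 1) * f.coeff (n - ((i : ℕ) + 1))))

/-- The splitting algebra `A_f = A[t₁,...,tₙ]/(s₁ - f₁, ..., sₙ - fₙ)`. -/
noncomputable def SplittingAlgebra (A : Type*) [CommRing A] (f : Polynomial A) (n : ℕ) :=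
  MvPolynomial (Fin n) A ⧸ splittingIdeal A f n

noncomputable instance (A : Type*) [CommRing A] (f : Polynomial A) (n : ℕ) :
    CommRing (SplittingAlgebra A f n) := Ideal.Quotient.commRing _

noncomputable instance (R A : Type*) [CommSemiring R] [CommRing A] [Algebra R A]
    (f : Polynomial A) (n : ℕ) : Algebra R (SplittingAlgebra A f n) :=
  Ideal.Quotient.algebra R

/-- The universal roots `τᵢ` of `f` in the splitting algebra. -/
noncomputable def univRoot (A : Type*) [CommRing A] (f : Polynomial A) (n : ℕ) (i : Fin n) :
    SplittingAlgebra A f n :=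
  Ideal.Quotient.mk (splittingIdeal A f n) (MvPolynomial.X i)

/-- The action of a permutation `σ` on the splitting algebra, sending `τᵢ` to `τ_{σ⁻¹ i}`. -/
noncomputable def permHom (A : Type*) [CommRing A] (f : Polynomial A) (n : ℕ)
    (σ : Equiv.Perm (Fin n)) : SplittingAlgebra A f n →ₐ[A] SplittingAlgebra A f n :=
  Ideal.Quotient.liftₐ (splittingIdeal A f n)
    ((Ideal.Quotient.mkₐ A (splittingIdeal A f n)).comp
      (rename (σ.symm : Fin n → Fin n)))
    (by
      intro a ha
      have h : splittingIdeal A f n ≤ RingHom.ker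
          ((Ideal.Quotient.mkₐ A (splittingIdeal A f n)).comp
            (rename (σ.symm : Fin n → Fin n))) := by
        rw [splittingIdeal, Ideal.span_le]
        rintro _ ⟨i, rfl⟩
        have : (rename (σ.symm : Fin n → Fin n))
            (esymm (Fin n) A ((i : ℕ) + 1) -
              MvPolynomial.C ((-1 : A) ^ ((i : ℕ) + 1) * f.coeff (n - ((i : ℕ) + 1)))) =
            esymm (Fin n) A ((i : ℕ) + 1) -
              MvPolynomial.C ((-1 : A) ^ ((i : ℕ) + 1) * f.coeff (n - ((i : ℕ) + 1))) := by
          rw [map_sub, rename_esymm, rename_C]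
        simp only [SetLike.mem_coe, RingHom.mem_ker, AlgHom.coe_comp, Function.comp_apply, this]
        rw [Ideal.Quotient.mkₐ_eq_mk, Ideal.Quotient.eq_zero_iff_mem]
        exact Ideal.subset_span ⟨i, rfl⟩
      exact h ha)

/-!
Over a ring `A` of characteristic 3 put `g = X³ - a`. The defining relations of the splitting
algebra say `e₁(τ) = e₂(τ) = 0` and `e₃(τ) = a`, so `(τᵢ - τⱼ)² = (τᵢ + τⱼ)e₁ - e₂ - 3τᵢτⱼ = 0`.
Modulo the ideal `I` of root differences all `τᵢ` become one element `c` with `c³ = a`, and the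
universal properties identify `A_g/I` with `A[X]/(X³ - a)`. When `A` is a field in which `a` is
not a cube (as `s` in `K(s)`), this is a field of degree 3, so `I` is maximal; being generated by
nilpotents it lies in every prime, so it is the unique maximal ideal. A permutation sends each
`τᵢ` to a root congruent to it modulo `I`, so `S₃` acts trivially on `A_g/I`.
-/

theorem MvPolynomial.aeval_esymm_fin_three {A B : Type*} [CommRing A] [CommRing B] [Algebra A B]
    (r : Fin 3 → B) :
    MvPolynomial.aeval r (esymm (Fin 3) A 1) = r 0 + r 1 + r 2 ∧
    MvPolynomial.aeval r (esymm (Fin 3) A 2) = r 0 * r 1 + r 0 * r 2 + r 1 * r 2 ∧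
    MvPolynomial.aeval r (esymm (Fin 3) A 3) = r 0 * r 1 * r 2 := by
  simp only [aeval_esymm_eq_multiset_esymm, Multiset.esymm, Finset.univ, Fintype.elems,
    List.finRange, List.ofFn_succ, Fin.isValue, Fin.succ_zero_eq_one, Fin.succ_one_eq_two,
    List.ofFn_zero, Multiset.map_coe, List.map_cons, List.map_nil, Multiset.powersetCard_coe,
    List.sublistsLen, List.sublistsLenAux, Function.comp_apply, id_eq, Multiset.coe_singleton,
    Multiset.prod_singleton, Multiset.sum_coe, List.sum_cons, List.sum_nil, add_zero,
    CompTriple.comp_eq, Multiset.prod_coe, List.prod_cons, List.prod_nil, mul_one,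
    Multiset.map_singleton, Multiset.sum_singleton]
  exact ⟨by ring, by ring, by ring⟩

theorem sub_sq_eq_zero_of_esymm_eq_zero {R : Type*} [CommRing R] (h3 : (3 : R) = 0)
    {x : Fin 3 → R} (h1 : x 0 + x 1 + x 2 = 0) (h2 : x 0 * x 1 + x 0 * x 2 + x 1 * x 2 = 0)
    (i j : Fin 3) : (x i - x j) ^ 2 = 0 := by
  rcases eq_or_ne i j with rfl | hij
  · simp
  have key : (x i - x j) ^ 2 = (x i + x j) * (x 0 + x 1 + x 2) -
      (x 0 * x 1 + x 0 * x 2 + x 1 * x 2) - 3 * (x i * x j) := by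
    fin_cases i <;> fin_cases j <;> first | exact absurd rfl hij | (simp; ring)
  rw [key, h1, h2, h3]
  ring

theorem ofNat_three_eq_zero_of_algebra {A : Type*} [CommRing A] [CharP A 3] (B : Type*)
    [Semiring B] [Algebra A B] : (3 : B) = 0 := by
  rw [← map_ofNat (algebraMap A B) 3, CharP.ofNat_eq_zero, map_zero]

theorem RatFunc.pow_three_ne_X {K : Type*} [Field K] (b : RatFunc K) : b ^ 3 ≠ RatFunc.X := by
  intro h
  rcases eq_or_ne b 0 with rfl | hb
  · exact RatFunc.X_ne_zero (by simpa using h.symm)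
  · have := congrArg RatFunc.intDegree h
    rw [RatFunc.intDegree_X, pow_succ, pow_two, RatFunc.intDegree_mul (mul_ne_zero hb hb) hb,
      RatFunc.intDegree_mul hb hb] at this
    omega

noncomputable section

namespace SplittingAlgebra

variable {A : Type*} [CommRing A] {f : A[X]} {n : ℕ}

theorem mk_eq_aeval_univRoot (p : MvPolynomial (Fin n) A) :
    Ideal.Quotient.mk (splittingIdeal A f n) p = MvPolynomial.aeval (univRoot A f n) p := by
  have : Ideal.Quotient.mkₐ A (splittingIdeal A f n) = MvPolynomial.aeval (univRoot A f n) :=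
    MvPolynomial.algHom_ext fun i => (aeval_X (univRoot A f n) i).symm
  exact DFunLike.congr_fun this p

theorem aeval_univRoot_esymm (i : Fin n) :
    MvPolynomial.aeval (univRoot A f n) (esymm (Fin n) A (i + 1)) =
      algebraMap A _ ((-1) ^ ((i : ℕ) + 1) * f.coeff (n - ((i : ℕ) + 1))) := by
  rw [← mk_eq_aeval_univRoot]
  exact Ideal.Quotient.eq.2 (Ideal.subset_span ⟨i, rfl⟩)

variable {B : Type*} [CommRing B] [Algebra A B]

def lift (r : Fin n → B) (hr : ∀ i : Fin n, MvPolynomial.aeval r (esymm (Fin n) A (i + 1)) =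
      algebraMap A B ((-1) ^ ((i : ℕ) + 1) * f.coeff (n - ((i : ℕ) + 1)))) :
    SplittingAlgebra A f n →ₐ[A] B :=
  Ideal.Quotient.liftₐ _ (MvPolynomial.aeval r) fun _ hp => by
    refine (Ideal.span_le (I := RingHom.ker (MvPolynomial.aeval r : _ →ₐ[A] B))).2 ?_ hp
    rintro _ ⟨i, rfl⟩
    simp [hr]

theorem lift_univRoot (r : Fin n → B) (hr) (i : Fin n) :
    lift (f := f) r hr (univRoot A f n i) = r i :=
  aeval_X r i

theorem algHom_ext {φ ψ : SplittingAlgebra A f n →ₐ[A] B}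
    (h : ∀ i, φ (univRoot A f n i) = ψ (univRoot A f n i)) : φ = ψ :=
  Ideal.Quotient.algHom_ext _ (MvPolynomial.algHom_ext h)

theorem permHom_univRoot (σ : Equiv.Perm (Fin n)) (i : Fin n) :
    permHom A f n σ (univRoot A f n i) = univRoot A f n (σ.symm i) :=
  congrArg (Ideal.Quotient.mk _) (rename_X _ i)

variable (A f n) in
def rootDiffIdeal : Ideal (SplittingAlgebra A f n) :=
  Ideal.span {x | ∃ i j : Fin n, x = univRoot A f n i - univRoot A f n j}

theorem univRoot_sub_mem_rootDiffIdeal (i j : Fin n) :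
    univRoot A f n i - univRoot A f n j ∈ rootDiffIdeal A f n :=
  Ideal.subset_span ⟨i, j, rfl⟩

theorem mk_univRoot_eq_mk_univRoot (i j : Fin n) :
    Ideal.Quotient.mk (rootDiffIdeal A f n) (univRoot A f n i) =
      Ideal.Quotient.mk (rootDiffIdeal A f n) (univRoot A f n j) :=
  Ideal.Quotient.eq.2 (univRoot_sub_mem_rootDiffIdeal i j)

theorem permHom_sub_mem_rootDiffIdeal (σ : Equiv.Perm (Fin n)) (x : SplittingAlgebra A f n) :
    permHom A f n σ x - x ∈ rootDiffIdeal A f n := by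
  have : (Ideal.Quotient.mkₐ A (rootDiffIdeal A f n)).comp (permHom A f n σ) =
      Ideal.Quotient.mkₐ A (rootDiffIdeal A f n) :=
    algHom_ext fun i => by
      simp only [AlgHom.comp_apply, permHom_univRoot, Ideal.Quotient.mkₐ_eq_mk]
      exact mk_univRoot_eq_mk_univRoot _ _
  exact Ideal.Quotient.eq.1 (DFunLike.congr_fun this x)

theorem comap_permHom_rootDiffIdeal (σ : Equiv.Perm (Fin n)) :
    (rootDiffIdeal A f n).comap (permHom A f n σ) = rootDiffIdeal A f n := by
  ext x
  rw [Ideal.mem_comap, ← sub_add_cancel (permHom A f n σ x) x]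
  exact Submodule.add_mem_iff_right _ (permHom_sub_mem_rootDiffIdeal σ x)

theorem rootDiffIdeal_le_of_isPrime
    (hnil : ∀ i j, IsNilpotent (univRoot A f n i - univRoot A f n j))
    (P : Ideal (SplittingAlgebra A f n)) [P.IsPrime] : rootDiffIdeal A f n ≤ P := by
  refine Ideal.span_le.2 ?_
  rintro _ ⟨i, j, rfl⟩
  obtain ⟨k, hk⟩ := hnil i j
  exact Ideal.IsPrime.mem_of_pow_mem ‹_› k (hk ▸ P.zero_mem)

variable [NeZero n]

def residueRoot : SplittingAlgebra A f n ⧸ rootDiffIdeal A f n :=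
  Ideal.Quotient.mk _ (univRoot A f n 0)

theorem aeval_residueRoot_esymm (i : Fin n) :
    MvPolynomial.aeval (fun _ => residueRoot) (esymm (Fin n) A (i + 1)) =
      algebraMap A (SplittingAlgebra A f n ⧸ rootDiffIdeal A f n)
        ((-1) ^ ((i : ℕ) + 1) * f.coeff (n - ((i : ℕ) + 1))) := by
  have : (fun _ => residueRoot) =
      fun j => Ideal.Quotient.mkₐ A (rootDiffIdeal A f n) (univRoot A f n j) :=
    funext fun j => mk_univRoot_eq_mk_univRoot 0 j
  rw [this, ← comp_aeval_apply, aeval_univRoot_esymm, AlgHom.commutes]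

def residueLift (b : B)
    (hb : ∀ i : Fin n, MvPolynomial.aeval (fun _ => b) (esymm (Fin n) A (i + 1)) =
      algebraMap A B ((-1) ^ ((i : ℕ) + 1) * f.coeff (n - ((i : ℕ) + 1)))) :
    SplittingAlgebra A f n ⧸ rootDiffIdeal A f n →ₐ[A] B :=
  Ideal.Quotient.liftₐ _ (lift _ hb) fun _ hx => by
    refine (Ideal.span_le (I := RingHom.ker (lift _ hb : _ →ₐ[A] B))).2 ?_ hx
    rintro _ ⟨i, j, rfl⟩
    simp [lift_univRoot]

theorem residueLift_residueRoot (b : B) (hb) :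
    residueLift (f := f) (n := n) b hb residueRoot = b :=
  lift_univRoot _ hb 0

theorem residue_algHom_ext {φ ψ : SplittingAlgebra A f n ⧸ rootDiffIdeal A f n →ₐ[A] B}
    (h : φ residueRoot = ψ residueRoot) : φ = ψ :=
  Ideal.Quotient.algHom_ext _ <| algHom_ext fun i => by
    simp only [AlgHom.comp_apply, Ideal.Quotient.mkₐ_eq_mk, ← mk_univRoot_eq_mk_univRoot 0 i]
    exact h

section CommRing

variable {A : Type*} [CommRing A] (a : A)

theorem esymm_relations_X_pow_three_sub_C_iff {B : Type*} [CommRing B] [Algebra A B]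
    (r : Fin 3 → B) :
    (∀ i : Fin 3, MvPolynomial.aeval r (esymm (Fin 3) A (i + 1)) =
        algebraMap A B ((-1) ^ ((i : ℕ) + 1) *
          (Polynomial.X ^ 3 - Polynomial.C a).coeff (3 - ((i : ℕ) + 1)))) ↔
      r 0 + r 1 + r 2 = 0 ∧ r 0 * r 1 + r 0 * r 2 + r 1 * r 2 = 0 ∧
        r 0 * r 1 * r 2 = algebraMap A B a := by
  obtain ⟨h1, h2, h3⟩ := MvPolynomial.aeval_esymm_fin_three (A := A) r
  simp [Fin.forall_fin_succ, Fin.sum_univ_three, h2, h3, pow_succ]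

theorem residueRoot_pow_three :
    (residueRoot : SplittingAlgebra A (Polynomial.X ^ 3 - Polynomial.C a) 3 ⧸
      rootDiffIdeal A (Polynomial.X ^ 3 - Polynomial.C a) 3) ^ 3 = algebraMap A _ a := by
  obtain ⟨-, -, h⟩ := (esymm_relations_X_pow_three_sub_C_iff a _).1 aeval_residueRoot_esymm
  linear_combination h

theorem _root_.AdjoinRoot.root_X_pow_three_sub_C_pow_three :
    AdjoinRoot.root (Polynomial.X ^ 3 - Polynomial.C a) ^ 3 = algebraMap A _ a := by
  have := AdjoinRoot.eval₂_root (Polynomial.X ^ 3 - Polynomial.C a)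
  rwa [Polynomial.eval₂_sub, Polynomial.eval₂_X_pow, Polynomial.eval₂_C, sub_eq_zero] at this

variable [CharP A 3]

theorem univRoot_sub_sq_eq_zero (i j : Fin 3) :
    (univRoot A (Polynomial.X ^ 3 - Polynomial.C a) 3 i -
      univRoot A (Polynomial.X ^ 3 - Polynomial.C a) 3 j) ^ 2 = 0 := by
  obtain ⟨h1, h2, -⟩ := (esymm_relations_X_pow_three_sub_C_iff a _).1 aeval_univRoot_esymm
  exact sub_sq_eq_zero_of_esymm_eq_zero (ofNat_three_eq_zero_of_algebra (A := A) _) h1 h2 i j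

theorem esymm_relations_X_pow_three_sub_C_const {B : Type*} [CommRing B] [Algebra A B] {b : B}
    (hb : b ^ 3 = algebraMap A B a) (i : Fin 3) :
    MvPolynomial.aeval (fun _ => b) (esymm (Fin 3) A (i + 1)) =
      algebraMap A B ((-1) ^ ((i : ℕ) + 1) *
        (Polynomial.X ^ 3 - Polynomial.C a).coeff (3 - ((i : ℕ) + 1))) := by
  have h3 := ofNat_three_eq_zero_of_algebra (A := A) B
  refine (esymm_relations_X_pow_three_sub_C_iff a _).2 ⟨?_, ?_, ?_⟩ i
  · linear_combination b * h3
  · linear_combination b ^ 2 * h3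
  · linear_combination hb

theorem map_X_pow_three_sub_C_residue :
    (Polynomial.X ^ 3 - Polynomial.C a).map
        (algebraMap A (SplittingAlgebra A (Polynomial.X ^ 3 - Polynomial.C a) 3 ⧸
          rootDiffIdeal A (Polynomial.X ^ 3 - Polynomial.C a) 3)) =
      (Polynomial.X - Polynomial.C residueRoot) ^ 3 := by
  have h3 := ofNat_three_eq_zero_of_algebra (A := A)
    (SplittingAlgebra A (Polynomial.X ^ 3 - Polynomial.C a) 3 ⧸
      rootDiffIdeal A (Polynomial.X ^ 3 - Polynomial.C a) 3)[X]
  rw [Polynomial.map_sub, Polynomial.map_pow, Polynomial.map_X, Polynomial.map_C,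
    ← residueRoot_pow_three, Polynomial.C_pow]
  linear_combination (Polynomial.X ^ 2 * Polynomial.C residueRoot -
    Polynomial.X * Polynomial.C residueRoot ^ 2) * h3

def residueEquivAdjoinRoot :
    (SplittingAlgebra A (Polynomial.X ^ 3 - Polynomial.C a) 3 ⧸
      rootDiffIdeal A (Polynomial.X ^ 3 - Polynomial.C a) 3) ≃ₐ[A]
      AdjoinRoot (Polynomial.X ^ 3 - Polynomial.C a) :=
  AlgEquiv.ofAlgHom
    (residueLift _ (esymm_relations_X_pow_three_sub_C_const a
      (AdjoinRoot.root_X_pow_three_sub_C_pow_three a)))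
    (AdjoinRoot.liftAlgHom _ (Algebra.ofId _ _) residueRoot (by simp [residueRoot_pow_three]))
    (AdjoinRoot.algHom_ext (by simp [residueLift_residueRoot]))
    (residue_algHom_ext (by simp [residueLift_residueRoot]))

end CommRing

section Field

variable {F : Type*} [Field F] [CharP F 3] {a : F}

theorem isMaximal_rootDiffIdeal_of_not_cube (ha : ∀ b, b ^ 3 ≠ a) :
    (rootDiffIdeal F (Polynomial.X ^ 3 - Polynomial.C a) 3).IsMaximal := by
  have := Fact.mk (X_pow_sub_C_irreducible_of_prime Nat.prime_three ha)
  exact Ideal.Quotient.maximal_of_isField _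
    (MulEquiv.isField (Field.toIsField _) (residueEquivAdjoinRoot a).toMulEquiv)

theorem finrank_residue_of_not_cube (ha : ∀ b, b ^ 3 ≠ a) :
    Module.finrank F (SplittingAlgebra F (Polynomial.X ^ 3 - Polynomial.C a) 3 ⧸
      rootDiffIdeal F (Polynomial.X ^ 3 - Polynomial.C a) 3) = 3 := by
  have hg : (Polynomial.X ^ 3 - Polynomial.C a : F[X]) ≠ 0 :=
    (X_pow_sub_C_irreducible_of_prime Nat.prime_three ha).ne_zero
  rw [(residueEquivAdjoinRoot a).toLinearEquiv.finrank_eq, (AdjoinRoot.powerBasis hg).finrank,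
    AdjoinRoot.powerBasis_dim, natDegree_X_pow_sub_C]

theorem not_surjective_algebraMap_residue_of_not_cube (ha : ∀ b, b ^ 3 ≠ a) :
    ¬ Function.Surjective
      (algebraMap F (SplittingAlgebra F (Polynomial.X ^ 3 - Polynomial.C a) 3 ⧸
        rootDiffIdeal F (Polynomial.X ^ 3 - Polynomial.C a) 3)) := fun h => by
  have := (Algebra.linearMap F _).finrank_le_finrank_of_surjective h
  rw [finrank_residue_of_not_cube ha, Module.finrank_self] at this
  omega

end Field

end SplittingAlgebra

end

open SplittingAlgebra

/-- Let `K` have characteristic 3 and `f(t) = t³ - s` over `K(s)`. In the splitting algebra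
`K(s)_f`: the differences of universal roots square to zero; the ideal `I` they generate is
the unique maximal ideal; `I` is `S₃`-stable; `S₃` acts trivially on the residue field
`K(s)_f/I`, although that residue field is the degree-3 splitting field of `t³ - s` and
properly contains `K(s)`. -/
theorem inseparable_cubic_example {K : Type*} [Field K] [CharP K 3]
    (f : Polynomial (RatFunc K)) (hf : f = Polynomial.X ^ 3 - Polynomial.C RatFunc.X)
    (I : Ideal (SplittingAlgebra (RatFunc K) f 3))
    (hI : I = Ideal.span
      {x | ∃ i j : Fin 3, x = univRoot (RatFunc K) f 3 i - univRoot (RatFunc K) f 3 j}) :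
    (∀ i j : Fin 3, (univRoot (RatFunc K) f 3 i - univRoot (RatFunc K) f 3 j) ^ 2 = 0) ∧
    I.IsMaximal ∧
    (∀ M : Ideal (SplittingAlgebra (RatFunc K) f 3), M.IsMaximal → M = I) ∧
    (∀ σ : Equiv.Perm (Fin 3), Ideal.comap (permHom (RatFunc K) f 3 σ) I = I) ∧
    (∀ (σ : Equiv.Perm (Fin 3)) (x : SplittingAlgebra (RatFunc K) f 3),
      permHom (RatFunc K) f 3 σ x - x ∈ I) ∧
    (∃ c : Fin 3 → SplittingAlgebra (RatFunc K) f 3 ⧸ I,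
      f.map (algebraMap (RatFunc K) (SplittingAlgebra (RatFunc K) f 3 ⧸ I)) =
        ∏ i : Fin 3, (Polynomial.X - Polynomial.C (c i))) ∧
    Module.finrank (RatFunc K) (SplittingAlgebra (RatFunc K) f 3 ⧸ I) = 3 ∧
    ¬ Function.Surjective
        (algebraMap (RatFunc K) (SplittingAlgebra (RatFunc K) f 3 ⧸ I)) := by
  subst hf
  obtain rfl : I = rootDiffIdeal _ _ 3 := hI
  have hcube := RatFunc.pow_three_ne_X (K := K)
  have hmax := isMaximal_rootDiffIdeal_of_not_cube hcube
  refine ⟨univRoot_sub_sq_eq_zero _, hmax, fun M hM => ?_, comap_permHom_rootDiffIdeal,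
    permHom_sub_mem_rootDiffIdeal, ⟨fun _ => residueRoot, ?_⟩,
    finrank_residue_of_not_cube hcube, not_surjective_algebraMap_residue_of_not_cube hcube⟩
  · exact (hmax.eq_of_le hM.ne_top (rootDiffIdeal_le_of_isPrime
      (fun i j => ⟨2, univRoot_sub_sq_eq_zero _ i j⟩) M)).symm
  · rw [Fin.prod_const]
    exact map_X_pow_three_sub_C_residue _
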